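/- Let m ≥ 1, let ⟪·,·⟫ be a nondegenerate symmetric bilinear form on ℝ^m, let B ⊆ ℝ^m be a convex body, and let N be the normal cone of B with respect to ⟪·,·⟫. Then exactly one of the following holds: (a) N ∪ {0} is a linear subspace of ℝ^m; or (b) there exist a unique linear subspace V ⊆ ℝ^m and a unique nonempty convex cone K ⊆ V with 0 ∉ K, open in the subspace topology of V, such that K ⊆ N ⊆ closure(K). In particular, in all cases the closure of N ∪ {0} is a convex cone. -/

import Mathlib

/-!
The barrier cone `C = {w | ⟪·, w⟫ is bounded below on B}` is a convex cone containing `N`; let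
`K` be its relative interior in `V = span C`. For `w ∈ K \ {0}` the functional `⟪·, w⟫` attains
its minimum on `B`: it is constant along the lineality space `L` of `B`, and on a complement of
`L` its sublevel sets in `B` are compact, because a recession direction `v` with `⟪v, w⟫ ≤ 0`
annihilates `C` when `w` is relatively interior, i.e. lies in `L`. A minimiser lies on `∂B` since
`⟪·, w⟫ ≠ 0`, so `K \ {0} ⊆ N ⊆ C ⊆ closure K`.

If `0 ∈ K` then `K = V` and `N ∪ {0} = V`. Otherwise `(V, K)` is the pair of (b), unique because
`V = span (closure K)` and `K` is the relative interior of `closure K`. The alternatives exclude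
each other: a relatively open convex set containing `k` and having `-k` in its closure contains `0`.
-/

open Set

/-- The normal cone of a convex body `B` with respect to a bilinear form `form`:
all nonzero `w` such that `⟪x − p, w⟫ ≥ 0` for all `x ∈ B`, for some boundary point `p`. -/
def normalCone {m : ℕ}
    (form : EuclideanSpace ℝ (Fin m) →ₗ[ℝ] EuclideanSpace ℝ (Fin m) →ₗ[ℝ] ℝ)
    (B : Set (EuclideanSpace ℝ (Fin m))) : Set (EuclideanSpace ℝ (Fin m)) :=
  {w | w ≠ 0 ∧ ∃ p ∈ frontier B, ∀ x ∈ B, 0 ≤ form (x - p) w}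

open Filter Topology
open scoped Pointwise

section Nondegenerate
variable {K E : Type*} [Field K] [AddCommGroup E] [Module K E] [FiniteDimensional K E]

theorem LinearMap.SeparatingLeft.bijective_flip {form : E →ₗ[K] E →ₗ[K] K}
    (hnd : form.SeparatingLeft) : Function.Bijective form.flip := by
  have hrank : Module.finrank K E = Module.finrank K (Module.Dual K E) :=
    Subspace.dual_finrank_eq.symm
  have hsurj : Function.Surjective form :=
    (LinearMap.injective_iff_surjective_of_finrank_eq_finrank hrank).mp
      (LinearMap.ker_eq_bot.mp (LinearMap.separatingLeft_iff_ker_eq_bot.mp hnd))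
  have hinj : Function.Injective form.flip := by
    rw [← LinearMap.ker_eq_bot, LinearMap.ker_eq_bot']
    intro w hw
    refine (Module.forall_dual_apply_eq_zero_iff K w).mp fun φ => ?_
    obtain ⟨x, rfl⟩ := hsurj φ
    exact LinearMap.congr_fun hw x
  exact ⟨hinj, (LinearMap.injective_iff_surjective_of_finrank_eq_finrank hrank).mp hinj⟩

end Nondegenerate

section Cones
variable {E : Type*} [AddCommGroup E] [Module ℝ E]

def barrierCone (form : E →ₗ[ℝ] E →ₗ[ℝ] ℝ) (B : Set E) : Set E :=
  {w | ∃ c, ∀ x ∈ B, c ≤ form x w}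

def recessionCone (B : Set E) : Set E := {v | ∀ x ∈ B, x + v ∈ B}

variable {form : E →ₗ[ℝ] E →ₗ[ℝ] ℝ} {B : Set E}

theorem zero_mem_barrierCone : (0 : E) ∈ barrierCone form B :=
  ⟨0, fun x _ => by simp⟩

theorem convex_barrierCone : Convex ℝ (barrierCone form B) := by
  rintro w₁ ⟨c₁, h₁⟩ w₂ ⟨c₂, h₂⟩ a b ha hb -
  refine ⟨a * c₁ + b * c₂, fun x hx => ?_⟩
  simp only [map_add, map_smul, smul_eq_mul]
  nlinarith [h₁ x hx, h₂ x hx]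

theorem smul_mem_barrierCone {c : ℝ} (hc : 0 ≤ c) {w : E} (hw : w ∈ barrierCone form B) :
    c • w ∈ barrierCone form B := by
  obtain ⟨b, hb⟩ := hw
  exact ⟨c * b, fun x hx => by simpa using mul_le_mul_of_nonneg_left (hb x hx) hc⟩

theorem add_natCast_smul_mem_of_mem_recessionCone {v x : E} (hv : v ∈ recessionCone B)
    (hx : x ∈ B) (n : ℕ) : x + (n : ℝ) • v ∈ B := by
  induction n with
  | zero => simpa using hx
  | succ k ih => simpa [add_smul, add_assoc] using hv _ ih

theorem form_nonneg_of_mem_recessionCone {v w : E} (hv : v ∈ recessionCone B)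
    (hw : w ∈ barrierCone form B) (hB : B.Nonempty) : 0 ≤ form v w := by
  obtain ⟨c, hc⟩ := hw
  obtain ⟨x, hx⟩ := hB
  by_contra! h
  obtain ⟨n, hn⟩ := exists_nat_gt ((form x w - c) / -form v w)
  have hxn := hc _ (add_natCast_smul_mem_of_mem_recessionCone hv hx n)
  rw [div_lt_iff₀ (by linarith)] at hn
  simp only [map_add, map_smul, LinearMap.add_apply, LinearMap.smul_apply, smul_eq_mul] at hxn
  linarith

-- For closed convex `B` this is the lineality space of `B` (see `add_mem_of_mem_lineality`).
def lineality (form : E →ₗ[ℝ] E →ₗ[ℝ] ℝ) (B : Set E) : Submodule ℝ E where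
  carrier := {v | ∀ u ∈ barrierCone form B, form v u = 0}
  add_mem' ha hb u hu := by simp [ha u hu, hb u hu]
  zero_mem' u _ := by simp
  smul_mem' c v hv u hu := by simp [hv u hu]

theorem mem_lineality_of_form_nonpos {v w : E}
    (hri : ∀ u ∈ barrierCone form B, ∃ ε : ℝ, 0 < ε ∧ w + ε • (w - u) ∈ barrierCone form B)
    (hv : ∀ u ∈ barrierCone form B, 0 ≤ form v u) (hvw : form v w ≤ 0) :
    v ∈ lineality form B := by
  intro u hu
  obtain ⟨ε, hε, hmem⟩ := hri u hu
  -- `0 ≤ ⟪v, w + ε (w - u)⟫ = (1 + ε) ⟪v, w⟫ - ε ⟪v, u⟫`, hence `⟪v, u⟫ ≤ 0`.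
  have hpush := hv _ hmem
  simp only [map_add, map_smul, map_sub, smul_eq_mul] at hpush
  nlinarith [hv u hu]

end Cones

section Recession
variable {E : Type*} [NormedAddCommGroup E] [NormedSpace ℝ E] {B : Set E}

theorem mem_recessionCone_of_ray (hconv : Convex ℝ B) (hclosed : IsClosed B) {x₀ v : E}
    (h : ∀ t : ℝ, 0 ≤ t → x₀ + t • v ∈ B) : v ∈ recessionCone B := by
  intro y hy
  -- `y + v + s (x₀ - y) = (1 - s) y + s (x₀ + s⁻¹ v)`, which tends to `y + v` as `s → 0⁺`.
  have hmem : ∀ s ∈ Ioo (0 : ℝ) 1, y + v + s • (x₀ - y) ∈ B := by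
    rintro s ⟨hs0, hs1⟩
    convert hconv.add_smul_sub_mem hy (h s⁻¹ (by positivity)) ⟨hs0.le, hs1.le⟩ using 1
    rw [show x₀ + s⁻¹ • v - y = (x₀ - y) + s⁻¹ • v by abel, smul_add, smul_smul,
      mul_inv_cancel₀ hs0.ne', one_smul]
    abel
  have hlim : Tendsto (fun s : ℝ => y + v + s • (x₀ - y)) (𝓝[>] 0) (𝓝 (y + v)) := by
    have : Continuous (fun s : ℝ => y + v + s • (x₀ - y)) := by fun_prop
    simpa using this.continuousWithinAt.tendsto (s := Ioi 0) (x := 0)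
  exact hclosed.mem_of_tendsto hlim (mem_of_superset (Ioo_mem_nhdsGT one_pos) hmem)

theorem mem_recessionCone_of_forall_form_nonneg [FiniteDimensional ℝ E]
    {form : E →ₗ[ℝ] E →ₗ[ℝ] ℝ} (hnd : form.SeparatingLeft)
    (hconv : Convex ℝ B) (hclosed : IsClosed B) {v : E}
    (h : ∀ u ∈ barrierCone form B, 0 ≤ form v u) : v ∈ recessionCone B := by
  intro x hx
  by_contra hxv
  obtain ⟨f, c, hfB, hfx⟩ := geometric_hahn_banach_closed_point hconv hclosed hxv
  obtain ⟨w, hw⟩ := hnd.bijective_flip.2 (-f).toLinearMap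
  have hform : ∀ y, form y w = -f y := fun y => LinearMap.congr_fun hw y
  have hwB : w ∈ barrierCone form B := ⟨-c, fun y hy => by rw [hform]; linarith [hfB y hy]⟩
  have hv : 0 ≤ -f v := hform v ▸ h w hwB
  linarith [hfB x hx, map_add f x v]

theorem exists_ray_of_not_isBounded [FiniteDimensional ℝ E] (hconv : Convex ℝ B)
    (hclosed : IsClosed B) {x₀ : E} (hx₀ : x₀ ∈ B) (hB : ¬ Bornology.IsBounded B) :
    ∃ v ≠ 0, ∀ t : ℝ, 0 ≤ t → x₀ + t • v ∈ B := by
  have hfar : ∀ n : ℕ, ∃ x ∈ B, (n : ℝ) + 1 ≤ ‖x - x₀‖ := by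
    intro n
    by_contra! hn
    exact hB ((Metric.isBounded_closedBall (x := x₀) (r := n + 1)).subset fun x hx =>
      (mem_closedBall_iff_norm.2 (hn x hx).le))
  choose x hxB hxn using hfar
  have hpos : ∀ n, 0 < ‖x n - x₀‖ := fun n => by linarith [hxn n, (n.cast_nonneg : (0:ℝ) ≤ n)]
  set u : ℕ → E := fun n => ‖x n - x₀‖⁻¹ • (x n - x₀)
  have hu : ∀ n, u n ∈ Metric.sphere (0 : E) 1 := fun n => by
    simp [u, norm_smul, (hpos n).ne']
  obtain ⟨v, hv, φ, hφ, hlim⟩ := (isCompact_sphere (0 : E) 1).tendsto_subseq hu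
  refine ⟨v, ne_zero_of_mem_unit_sphere ⟨v, hv⟩, fun t ht => ?_⟩
  refine hclosed.mem_of_tendsto (tendsto_const_nhds.add (hlim.const_smul t)) ?_
  obtain ⟨N, hN⟩ := exists_nat_ge t
  filter_upwards [eventually_ge_atTop N] with n hn
  have htn : t ≤ ‖x (φ n) - x₀‖ := by
    have : (n : ℝ) ≤ φ n := by exact_mod_cast hφ.le_apply
    linarith [hxn (φ n), (Nat.cast_le.2 hn : (N : ℝ) ≤ n)]
  convert hconv.add_smul_sub_mem hx₀ (hxB (φ n))
    ⟨div_nonneg ht (hpos _).le, (div_le_one (hpos _)).2 htn⟩ using 2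
  simp only [u, Function.comp, smul_smul, div_eq_mul_inv]

end Recession

section Attainment
variable {E : Type*} [NormedAddCommGroup E] [NormedSpace ℝ E] [FiniteDimensional ℝ E]
  {form : E →ₗ[ℝ] E →ₗ[ℝ] ℝ} {B : Set E}

theorem add_mem_of_mem_lineality (hnd : form.SeparatingLeft) (hconv : Convex ℝ B)
    (hclosed : IsClosed B) {x a : E} (hx : x ∈ B) (ha : a ∈ lineality form B) : x + a ∈ B :=
  mem_recessionCone_of_forall_form_nonneg hnd hconv hclosed (fun u hu => (ha u hu).ge) x hx

theorem exists_mem_form_eq_of_isCompl (hnd : form.SeparatingLeft) (hconv : Convex ℝ B)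
    (hclosed : IsClosed B) {w : E} (hw : w ∈ barrierCone form B) {L' : Submodule ℝ E}
    (hL : IsCompl (lineality form B) L') {x : E} (hx : x ∈ B) :
    ∃ b ∈ B, b ∈ L' ∧ form b w = form x w := by
  obtain ⟨a, ha, b, hb, rfl⟩ := Submodule.mem_sup.mp (hL.sup_eq_top ▸ Submodule.mem_top (x := x))
  refine ⟨b, ?_, hb, by simp [ha w hw]⟩
  simpa using add_mem_of_mem_lineality hnd hconv hclosed hx (neg_mem ha)

theorem isBounded_sublevel_of_isCompl (hconv : Convex ℝ B)
    (hclosed : IsClosed B) (hB : B.Nonempty) {w : E}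
    (hri : ∀ u ∈ barrierCone form B, ∃ ε : ℝ, 0 < ε ∧ w + ε • (w - u) ∈ barrierCone form B)
    {L' : Submodule ℝ E} (hL : IsCompl (lineality form B) L') {x₀ : E} (hx₀B : x₀ ∈ B)
    (hx₀L' : x₀ ∈ L') : Bornology.IsBounded (B ∩ L' ∩ {x | form x w ≤ form x₀ w}) := by
  by_contra hS
  have hS_conv : Convex ℝ (B ∩ L' ∩ {x | form x w ≤ form x₀ w}) :=
    (hconv.inter L'.convex).inter (convex_halfSpace_le (form.flip w).isLinear _)
  have hS_closed : IsClosed (B ∩ L' ∩ {x | form x w ≤ form x₀ w}) :=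
    (hclosed.inter L'.closed_of_finiteDimensional).inter
      (isClosed_le (form.flip w).continuous_of_finiteDimensional continuous_const)
  obtain ⟨v, hv0, hray⟩ :=
    exists_ray_of_not_isBounded hS_conv hS_closed ⟨⟨hx₀B, hx₀L'⟩, le_refl (form x₀ w)⟩ hS
  have hvB : v ∈ recessionCone B :=
    mem_recessionCone_of_ray hconv hclosed fun t ht => (hray t ht).1.1
  obtain ⟨⟨-, hvL'⟩, hvw⟩ := one_smul ℝ v ▸ hray 1 zero_le_one
  have hvL' : v ∈ L' := by simpa using L'.sub_mem hvL' hx₀L'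
  have hvw : form v w ≤ 0 := by simpa using (hvw : form (x₀ + v) w ≤ form x₀ w)
  have hvL : v ∈ lineality form B := mem_lineality_of_form_nonpos hri
    (fun u hu => form_nonneg_of_mem_recessionCone hvB hu hB) hvw
  exact hv0 (Submodule.disjoint_def.mp hL.disjoint v hvL hvL')

theorem exists_isMinOn_form (hnd : form.SeparatingLeft) (hconv : Convex ℝ B)
    (hclosed : IsClosed B) (hB : B.Nonempty) {w : E} (hw : w ∈ barrierCone form B)
    (hri : ∀ u ∈ barrierCone form B, ∃ ε : ℝ, 0 < ε ∧ w + ε • (w - u) ∈ barrierCone form B) :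
    ∃ p ∈ B, IsMinOn (fun x => form x w) B p := by
  obtain ⟨L', hL⟩ := (lineality form B).exists_isCompl
  obtain ⟨x₀, hx₀B, hx₀L', -⟩ :=
    exists_mem_form_eq_of_isCompl hnd hconv hclosed hw hL hB.some_mem
  have hS_compact : IsCompact (B ∩ L' ∩ {x | form x w ≤ form x₀ w}) :=
    Metric.isCompact_of_isClosed_isBounded
      ((hclosed.inter L'.closed_of_finiteDimensional).inter
        (isClosed_le (form.flip w).continuous_of_finiteDimensional continuous_const))
      (isBounded_sublevel_of_isCompl hconv hclosed hB hri hL hx₀B hx₀L')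
  obtain ⟨p, hpS, hpmin⟩ := hS_compact.exists_isMinOn ⟨x₀, ⟨hx₀B, hx₀L'⟩, le_refl (form x₀ w)⟩
    (form.flip w).continuous_of_finiteDimensional.continuousOn
  refine ⟨p, hpS.1.1, fun x hx => ?_⟩
  obtain ⟨b, hbB, hbL', hb⟩ := exists_mem_form_eq_of_isCompl hnd hconv hclosed hw hL hx
  rcases le_total (form b w) (form x₀ w) with h | h
  · exact (hpmin ⟨⟨hbB, hbL'⟩, h⟩).trans_eq hb
  · exact hpS.2.trans (h.trans_eq hb)

end Attainment

section RelativeInterior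
variable {E : Type*} [NormedAddCommGroup E] [NormedSpace ℝ E] {V : Submodule ℝ E} {s K : Set E}

def relInteriorIn (V : Submodule ℝ E) (s : Set E) : Set E :=
  ((↑) : V → E) '' interior ((↑) ⁻¹' s)

theorem Convex.preimage_coe (hs : Convex ℝ s) : Convex ℝ ((↑) ⁻¹' s : Set V) :=
  hs.linear_preimage V.subtype

theorem preimage_relInteriorIn :
    ((↑) ⁻¹' relInteriorIn V s : Set V) = interior ((↑) ⁻¹' s) :=
  Subtype.val_injective.preimage_image _

theorem relInteriorIn_subset : relInteriorIn V s ⊆ s :=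
  image_subset_iff.2 interior_subset

theorem relInteriorIn_subset_submodule : relInteriorIn V s ⊆ V := by
  rintro _ ⟨v, -, rfl⟩
  exact v.2

theorem isOpen_preimage_relInteriorIn : IsOpen ((↑) ⁻¹' relInteriorIn V s : Set V) :=
  preimage_relInteriorIn (V := V) ▸ isOpen_interior

theorem convex_relInteriorIn (hs : Convex ℝ s) : Convex ℝ (relInteriorIn V s) :=
  hs.preimage_coe.interior.linear_image V.subtype

theorem smul_mem_relInteriorIn (hs : ∀ c : ℝ, 0 < c → ∀ x ∈ s, c • x ∈ s) {c : ℝ} (hc : 0 < c)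
    {x : E} (hx : x ∈ relInteriorIn V s) : c • x ∈ relInteriorIn V s := by
  obtain ⟨x', hx', rfl⟩ := hx
  refine ⟨c • x', ?_, rfl⟩
  have hsub : c • ((↑) ⁻¹' s : Set V) ⊆ (↑) ⁻¹' s := by
    rintro _ ⟨y, hy, rfl⟩
    exact hs c hc _ hy
  exact interior_mono hsub (interior_smul₀ (α := V) hc.ne' ((↑) ⁻¹' s) ▸ smul_mem_smul_set hx')

theorem exists_pos_add_smul_mem (hKo : IsOpen ((↑) ⁻¹' K : Set V)) {w d : E} (hw : w ∈ K)
    (hwV : w ∈ V) (hd : d ∈ V) : ∃ ε : ℝ, 0 < ε ∧ w + ε • d ∈ K := by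
  have hcont : Continuous fun θ : ℝ => (⟨w, hwV⟩ : V) + θ • ⟨d, hd⟩ := by fun_prop
  have hev : ∀ᶠ θ in 𝓝 (0 : ℝ), (⟨w, hwV⟩ : V) + θ • ⟨d, hd⟩ ∈ (↑) ⁻¹' K :=
    hcont.continuousAt.preimage_mem_nhds (hKo.mem_nhds (by simpa using hw))
  obtain ⟨θ, hθK, hθ⟩ := ((hev.filter_mono nhdsWithin_le_nhds).and
    (self_mem_nhdsWithin (s := Ioi 0))).exists
  exact ⟨θ, hθ, hθK⟩

theorem Convex.subset_closure_relInteriorIn (hs : Convex ℝ s) (hsV : s ⊆ V)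
    (hne : (relInteriorIn V s).Nonempty) : s ⊆ closure (relInteriorIn V s) := by
  intro x hx
  have hint : (interior ((↑) ⁻¹' s : Set V)).Nonempty := by
    obtain ⟨_, y, hy, rfl⟩ := hne
    exact ⟨y, hy⟩
  have hx' : (⟨x, hsV hx⟩ : V) ∈ closure (interior ((↑) ⁻¹' s)) := by
    rw [hs.preimage_coe.closure_interior_eq_closure_of_nonempty_interior hint]
    exact subset_closure hx
  exact image_closure_subset_closure_image continuous_subtype_val ⟨_, hx', rfl⟩

theorem Convex.relInteriorIn_span_nonempty [FiniteDimensional ℝ E] (hs : Convex ℝ s)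
    (h0 : (0 : E) ∈ s) : (relInteriorIn (Submodule.span ℝ s) s).Nonempty := by
  set t : Set (Submodule.span ℝ s) := (↑) ⁻¹' s
  have ht0 : (0 : Submodule.span ℝ s) ∈ t := h0
  have haff : affineSpan ℝ t = ⊤ := by
    rw [← AffineSubspace.coe_eq_univ_iff, ← insert_eq_of_mem ht0, affineSpan_insert_zero,
      Submodule.span_span_coe_preimage, Submodule.top_coe]
  obtain ⟨x, hx⟩ := (hs.preimage_coe.interior_nonempty_iff_affineSpan_eq_top).2 haff
  exact ⟨x, x, hx, rfl⟩

theorem closure_preimage_coe (hKV : K ⊆ V) :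
    closure ((↑) ⁻¹' K : Set V) = (↑) ⁻¹' closure K := by
  rw [Topology.IsEmbedding.subtypeVal.closure_eq_preimage_closure_image,
    image_preimage_eq_of_subset (by simpa using hKV)]

theorem le_span_of_isOpen (hKV : K ⊆ V) (hKo : IsOpen ((↑) ⁻¹' K : Set V)) (hne : K.Nonempty) :
    V ≤ Submodule.span ℝ K := by
  obtain ⟨k, hk⟩ := hne
  have htop : Submodule.span ℝ ((↑) ⁻¹' K : Set V) = ⊤ := by
    refine Submodule.eq_top_of_nonempty_interior' _ ⟨⟨k, hKV hk⟩, ?_⟩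
    exact interior_mono Submodule.subset_span (hKo.interior_eq.symm ▸ hk)
  intro v hv
  have := Submodule.mem_map_of_mem (f := V.subtype) (htop ▸ Submodule.mem_top (x := (⟨v, hv⟩ : V)))
  rwa [Submodule.map_span, Submodule.coe_subtype,
    image_preimage_eq_of_subset (by simpa using hKV)] at this

theorem eq_span_closure_of_isOpen [FiniteDimensional ℝ E] (hKV : K ⊆ V)
    (hKo : IsOpen ((↑) ⁻¹' K : Set V)) (hne : K.Nonempty) :
    V = Submodule.span ℝ (closure K) :=
  ((le_span_of_isOpen hKV hKo hne).trans (Submodule.span_mono subset_closure)).antisymm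
    (Submodule.span_le.2 (closure_minimal hKV (Submodule.closed_of_finiteDimensional _)))

theorem relInteriorIn_closure_eq (hKV : K ⊆ V) (hKo : IsOpen ((↑) ⁻¹' K : Set V))
    (hKc : Convex ℝ K) (hne : K.Nonempty) : relInteriorIn V (closure K) = K := by
  obtain ⟨k, hk⟩ := hne
  rw [relInteriorIn, ← closure_preimage_coe hKV,
    hKc.preimage_coe.interior_closure_eq_interior_of_nonempty_interior
      ⟨⟨k, hKV hk⟩, hKo.interior_eq.symm ▸ hk⟩,
    hKo.interior_eq, image_preimage_eq_of_subset (by simpa using hKV)]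

theorem zero_mem_of_neg_mem_closure (hKV : K ⊆ V) (hKo : IsOpen ((↑) ⁻¹' K : Set V))
    (hKc : Convex ℝ K) {k : E} (hk : k ∈ K) (hk' : -k ∈ closure K) : (0 : E) ∈ K := by
  set k' : V := ⟨k, hKV hk⟩
  have hint : k' ∈ interior ((↑) ⁻¹' K) := hKo.interior_eq.symm ▸ hk
  have hcl : -k' ∈ closure ((↑) ⁻¹' K) := (closure_preimage_coe hKV).symm ▸ hk'
  have h := hKc.preimage_coe.combo_interior_closure_mem_interior hint hcl
    (by norm_num : (0 : ℝ) < 1 / 2) (by norm_num : (0 : ℝ) ≤ 1 / 2) (by norm_num)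
  rw [smul_neg, add_neg_cancel] at h
  exact interior_subset (s := ((↑) ⁻¹' K : Set V)) h

theorem eq_submodule_of_zero_mem (hKV : K ⊆ V) (hKo : IsOpen ((↑) ⁻¹' K : Set V))
    (hcone : ∀ c : ℝ, 0 < c → ∀ x ∈ K, c • x ∈ K) (h0 : (0 : E) ∈ K) : K = V := by
  refine hKV.antisymm fun v hv => ?_
  obtain ⟨ε, hε, hεv⟩ := exists_pos_add_smul_mem hKo h0 V.zero_mem hv
  simpa [smul_smul, inv_mul_cancel₀ hε.ne'] using hcone ε⁻¹ (inv_pos.2 hε) _ hεv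

end RelativeInterior

section RelOpenCone
variable {E : Type*} [NormedAddCommGroup E] [NormedSpace ℝ E] {V : Submodule ℝ E} {K N : Set E}

theorem eq_of_closure_eq [FiniteDimensional ℝ E] {V₁ V₂ : Submodule ℝ E} {K₁ K₂ : Set E}
    (hKV₁ : K₁ ⊆ V₁) (hKo₁ : IsOpen ((↑) ⁻¹' K₁ : Set V₁)) (hKc₁ : Convex ℝ K₁) (hne₁ : K₁.Nonempty)
    (hKV₂ : K₂ ⊆ V₂) (hKo₂ : IsOpen ((↑) ⁻¹' K₂ : Set V₂)) (hKc₂ : Convex ℝ K₂)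
    (hne₂ : K₂.Nonempty) (h : closure K₁ = closure K₂) : V₁ = V₂ ∧ K₁ = K₂ := by
  obtain rfl : V₁ = V₂ := by
    rw [eq_span_closure_of_isOpen hKV₁ hKo₁ hne₁, eq_span_closure_of_isOpen hKV₂ hKo₂ hne₂, h]
  refine ⟨rfl, ?_⟩
  rw [← relInteriorIn_closure_eq hKV₁ hKo₁ hKc₁ hne₁,
    ← relInteriorIn_closure_eq hKV₂ hKo₂ hKc₂ hne₂, h]

theorem zero_mem_of_union_zero_eq_submodule (hKV : K ⊆ V) (hKo : IsOpen ((↑) ⁻¹' K : Set V))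
    (hKc : Convex ℝ K) (hne : K.Nonempty) (hKN : K ⊆ N) (hNK : N ⊆ closure K)
    (hN0 : (0 : E) ∉ N) {W : Submodule ℝ E} (hW : N ∪ {0} = W) : (0 : E) ∈ K := by
  obtain ⟨k, hk⟩ := hne
  have hkW : k ∈ (W : Set E) := hW ▸ Or.inl (hKN hk)
  have hnegk : -k ∈ N ∪ {0} := hW ▸ W.neg_mem hkW
  have hk0 : k ≠ 0 := fun h => hN0 (h ▸ hKN hk)
  exact zero_mem_of_neg_mem_closure hKV hKo hKc hk
    (hNK (hnegk.resolve_right (by simpa using hk0)))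

structure IsRelOpenConvexCone (V : Submodule ℝ E) (K : Set E) : Prop where
  nonempty : K.Nonempty
  convex : Convex ℝ K
  smul_mem : ∀ c : ℝ, 0 < c → ∀ x ∈ K, c • x ∈ K
  subset : K ⊆ V
  isOpen : IsOpen ((↑) ⁻¹' K : Set V)

namespace IsRelOpenConvexCone

theorem zero_mem_closure (hK : IsRelOpenConvexCone V K) : (0 : E) ∈ closure K := by
  obtain ⟨k, hk⟩ := hK.nonempty
  have hlim : Tendsto (fun c : ℝ => c • k) (𝓝[>] 0) (𝓝 0) := by
    have hcont : Continuous fun c : ℝ => c • k := by fun_prop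
    simpa using (hcont.tendsto 0).mono_left nhdsWithin_le_nhds
  exact mem_closure_of_tendsto hlim
    (eventually_nhdsWithin_of_forall fun c hc => hK.smul_mem c hc k hk)

theorem smul_mem_closure (hK : IsRelOpenConvexCone V K) {c : ℝ} (hc : 0 ≤ c) {x : E}
    (hx : x ∈ closure K) : c • x ∈ closure K := by
  rcases hc.eq_or_lt with rfl | hc
  · simpa using hK.zero_mem_closure
  · exact closure_mono (image_subset_iff.2 fun y hy => hK.smul_mem c hc y hy)
      (image_closure_subset_closure_image (continuous_const_smul c) ⟨x, hx, rfl⟩)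

theorem closure_union_zero_eq (hK : IsRelOpenConvexCone V K) (hKN : K \ {0} ⊆ N)
    (hNK : N ⊆ closure K) : closure (N ∪ {0}) = closure K := by
  refine (closure_minimal (union_subset hNK (singleton_subset_iff.2 hK.zero_mem_closure))
    isClosed_closure).antisymm (closure_mono fun x hx => ?_)
  by_cases h : x = 0
  · exact Or.inr h
  · exact Or.inl (hKN ⟨hx, h⟩)

theorem xor_of_subset_of_subset_closure [FiniteDimensional ℝ E] (hK : IsRelOpenConvexCone V K)
    (hN0 : (0 : E) ∉ N) (hKN : K \ {0} ⊆ N) (hNK : N ⊆ closure K) :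
    Xor (∃ W : Submodule ℝ E, N ∪ {0} = (W : Set E))
      (∃! VK : Submodule ℝ E × Set E,
        VK.2.Nonempty ∧ (0 : E) ∉ VK.2 ∧
        Convex ℝ VK.2 ∧ (∀ c : ℝ, 0 < c → ∀ x ∈ VK.2, c • x ∈ VK.2) ∧
        VK.2 ⊆ (VK.1 : Set E) ∧ IsOpen {v : VK.1 | (v : E) ∈ VK.2} ∧
        VK.2 ⊆ N ∧ N ⊆ closure VK.2) := by
  by_cases h0 : (0 : E) ∈ K
  · have hKV := eq_submodule_of_zero_mem hK.subset hK.isOpen hK.smul_mem h0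
    have hNV : N ∪ {0} = V := by
      refine (union_subset ?_ (singleton_subset_iff.2 V.zero_mem)).antisymm fun v hv => ?_
      · rw [hKV, (Submodule.closed_of_finiteDimensional V).closure_eq] at hNK
        exact hNK
      · by_cases hv0 : v = 0
        · exact Or.inr hv0
        · exact Or.inl (hKN ⟨hKV ▸ hv, hv0⟩)
    refine Or.inl ⟨⟨V, hNV⟩, ?_⟩
    rintro ⟨⟨V₂, K₂⟩, ⟨hne₂, h0₂, hc₂, -, hKV₂, hKo₂, hKN₂, hNK₂⟩, -⟩
    exact h0₂ (zero_mem_of_union_zero_eq_submodule hKV₂ hKo₂ hc₂ hne₂ hKN₂ hNK₂ hN0 hNV)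
  · have hKN' : K ⊆ N := fun x hx => hKN ⟨hx, fun hx0 => h0 (hx0 ▸ hx)⟩
    refine Or.inr ⟨⟨(V, K), ⟨hK.nonempty, h0, hK.convex, hK.smul_mem, hK.subset, hK.isOpen, hKN',
      hNK⟩, ?_⟩, fun ⟨W, hW⟩ => h0 (zero_mem_of_union_zero_eq_submodule hK.subset hK.isOpen
        hK.convex hK.nonempty hKN' hNK hN0 hW)⟩
    rintro ⟨V₂, K₂⟩ ⟨hne₂, -, hc₂, -, hKV₂, hKo₂, hKN₂, hNK₂⟩
    have hcl : closure K₂ = closure K :=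
      (closure_minimal (hKN₂.trans hNK) isClosed_closure).antisymm
        (closure_minimal (hKN'.trans hNK₂) isClosed_closure)
    obtain ⟨rfl, rfl⟩ := eq_of_closure_eq hKV₂ hKo₂ hc₂ hne₂ hK.subset hK.isOpen hK.convex
      hK.nonempty hcl
    rfl

end IsRelOpenConvexCone

theorem isRelOpenConvexCone_relInteriorIn_span [FiniteDimensional ℝ E] {C : Set E}
    (hC : Convex ℝ C) (hC0 : (0 : E) ∈ C) (hcone : ∀ c : ℝ, 0 < c → ∀ x ∈ C, c • x ∈ C) :
    IsRelOpenConvexCone (Submodule.span ℝ C) (relInteriorIn (Submodule.span ℝ C) C) where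
  nonempty := hC.relInteriorIn_span_nonempty hC0
  convex := convex_relInteriorIn hC
  smul_mem _ hc _ hx := smul_mem_relInteriorIn hcone hc hx
  subset := relInteriorIn_subset_submodule
  isOpen := isOpen_preimage_relInteriorIn

end RelOpenCone

section NormalCone
variable {m : ℕ} {form : EuclideanSpace ℝ (Fin m) →ₗ[ℝ] EuclideanSpace ℝ (Fin m) →ₗ[ℝ] ℝ}
  {B : Set (EuclideanSpace ℝ (Fin m))}

theorem normalCone_subset_barrierCone : normalCone form B ⊆ barrierCone form B := by
  rintro w ⟨-, p, -, h⟩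
  exact ⟨form p w, fun x hx => by simpa using h x hx⟩

theorem mem_normalCone_of_isMinOn (hnd : form.SeparatingLeft) {w p : EuclideanSpace ℝ (Fin m)}
    (hw : w ≠ 0) (hp : p ∈ B) (hmin : IsMinOn (fun x => form x w) B p) :
    w ∈ normalCone form B := by
  refine ⟨hw, p, ⟨subset_closure hp, fun hpint => hw ?_⟩, fun x hx => by simpa using hmin hx⟩
  have hzero := (hmin.isLocalMin (mem_interior_iff_mem_nhds.mp hpint)).hasFDerivAt_eq_zero
    (form.flip w).toContinuousLinearMap.hasFDerivAt
  refine hnd.bijective_flip.1 (LinearMap.ext fun x => ?_)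
  simpa using DFunLike.congr_fun hzero x

theorem exists_isRelOpenConvexCone_normalCone (hnd : form.SeparatingLeft) (hconv : Convex ℝ B)
    (hclosed : IsClosed B) (hB : B.Nonempty) :
    ∃ V K, IsRelOpenConvexCone V K ∧ K \ {0} ⊆ normalCone form B ∧
      normalCone form B ⊆ closure K := by
  set C := barrierCone form B
  have hK := isRelOpenConvexCone_relInteriorIn_span convex_barrierCone zero_mem_barrierCone
    fun c hc _ => smul_mem_barrierCone (form := form) (B := B) hc.le
  refine ⟨_, _, hK, ?_, normalCone_subset_barrierCone.trans
    (convex_barrierCone.subset_closure_relInteriorIn Submodule.subset_span hK.nonempty)⟩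
  rintro w ⟨hw, hw0⟩
  have hwV : w ∈ Submodule.span ℝ C := relInteriorIn_subset_submodule hw
  have hri : ∀ u ∈ C, ∃ ε : ℝ, 0 < ε ∧ w + ε • (w - u) ∈ C := fun u hu =>
    (exists_pos_add_smul_mem isOpen_preimage_relInteriorIn hw hwV
      (sub_mem hwV (Submodule.subset_span hu))).imp
      fun _ h => ⟨h.1, relInteriorIn_subset h.2⟩
  obtain ⟨p, hp, hmin⟩ :=
    exists_isMinOn_form hnd hconv hclosed hB (relInteriorIn_subset hw) hri
  exact mem_normalCone_of_isMinOn hnd hw0 hp hmin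

end NormalCone

theorem stmt_8_general {m : ℕ}
    (form : EuclideanSpace ℝ (Fin m) →ₗ[ℝ] EuclideanSpace ℝ (Fin m) →ₗ[ℝ] ℝ)
    (hnd : ∀ x, (∀ y, form x y = 0) → x = 0)
    (B : Set (EuclideanSpace ℝ (Fin m)))
    (hconv : Convex ℝ B) (hclosed : IsClosed B) (hint : (interior B).Nonempty) :
    (Xor'
      -- (a) N ∪ {0} is a linear subspace
      (∃ V : Submodule ℝ (EuclideanSpace ℝ (Fin m)),
        normalCone form B ∪ {0} = (V : Set (EuclideanSpace ℝ (Fin m))))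
      -- (b) a unique subspace V and unique open convex cone K in V with K ⊆ N ⊆ closure K
      (∃! VK : Submodule ℝ (EuclideanSpace ℝ (Fin m)) × Set (EuclideanSpace ℝ (Fin m)),
        VK.2.Nonempty ∧ (0 : EuclideanSpace ℝ (Fin m)) ∉ VK.2 ∧
        Convex ℝ VK.2 ∧ (∀ c : ℝ, 0 < c → ∀ x ∈ VK.2, c • x ∈ VK.2) ∧
        VK.2 ⊆ (VK.1 : Set (EuclideanSpace ℝ (Fin m))) ∧
        IsOpen {v : VK.1 | (v : EuclideanSpace ℝ (Fin m)) ∈ VK.2} ∧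
        VK.2 ⊆ normalCone form B ∧ normalCone form B ⊆ closure VK.2)) ∧
    -- in all cases the closure of N ∪ {0} is a convex cone
    Convex ℝ (closure (normalCone form B ∪ {0})) ∧
    (∀ c : ℝ, 0 ≤ c → ∀ x ∈ closure (normalCone form B ∪ {0}),
      c • x ∈ closure (normalCone form B ∪ {0})) := by
  obtain ⟨V, K, hK, hKN, hNK⟩ :=
    exists_isRelOpenConvexCone_normalCone hnd hconv hclosed (hint.mono interior_subset)
  have hN0 : (0 : EuclideanSpace ℝ (Fin m)) ∉ normalCone form B := fun h => h.1 rfl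
  have hcl := hK.closure_union_zero_eq hKN hNK
  refine ⟨hK.xor_of_subset_of_subset_closure hN0 hKN hNK, hcl ▸ hK.convex.closure, ?_⟩
  simpa only [hcl] using fun c hc x hx => hK.smul_mem_closure hc hx

theorem stmt_8 {m : ℕ} (hm : 1 ≤ m)
    (form : EuclideanSpace ℝ (Fin m) →ₗ[ℝ] EuclideanSpace ℝ (Fin m) →ₗ[ℝ] ℝ)
    (hsymm : ∀ x y, form x y = form y x)
    (hnd : ∀ x, (∀ y, form x y = 0) → x = 0)
    (B : Set (EuclideanSpace ℝ (Fin m)))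
    (hconv : Convex ℝ B) (hclosed : IsClosed B) (hint : (interior B).Nonempty) :
    (Xor'
      -- (a) N ∪ {0} is a linear subspace
      (∃ V : Submodule ℝ (EuclideanSpace ℝ (Fin m)),
        normalCone form B ∪ {0} = (V : Set (EuclideanSpace ℝ (Fin m))))
      -- (b) a unique subspace V and unique open convex cone K in V with K ⊆ N ⊆ closure K
      (∃! VK : Submodule ℝ (EuclideanSpace ℝ (Fin m)) × Set (EuclideanSpace ℝ (Fin m)),
        VK.2.Nonempty ∧ (0 : EuclideanSpace ℝ (Fin m)) ∉ VK.2 ∧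
        Convex ℝ VK.2 ∧ (∀ c : ℝ, 0 < c → ∀ x ∈ VK.2, c • x ∈ VK.2) ∧
        VK.2 ⊆ (VK.1 : Set (EuclideanSpace ℝ (Fin m))) ∧
        IsOpen {v : VK.1 | (v : EuclideanSpace ℝ (Fin m)) ∈ VK.2} ∧
        VK.2 ⊆ normalCone form B ∧ normalCone form B ⊆ closure VK.2)) ∧
    -- in all cases the closure of N ∪ {0} is a convex cone
    Convex ℝ (closure (normalCone form B ∪ {0})) ∧
    (∀ c : ℝ, 0 ≤ c → ∀ x ∈ closure (normalCone form B ∪ {0}),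
      c • x ∈ closure (normalCone form B ∪ {0})) :=
  stmt_8_general form hnd B hconv hclosed hint
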